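/- arXiv:math-ph/0011033 — 5 statements merged into one kernel-verified Lean document; each statement's English description precedes it below -/
import Mathlib

section
/- Let f ∈ L¹(ℝ) be nonnegative. Then the double integral (1/R) ∫_0^R ∫_R^∞ f(x − y) dy dx tends to 0 as R → ∞. -/
/-!
The inner integral is a tail of `f`: `∫_{y > R} f (x - y) dy = ∫_{t < x - R} f t dt`, so the
expression is the mean of the tail `s ↦ ∫_{t < -s} f` over `[0, R]`. That tail is bounded by
`‖f‖₁` and tends to `0`, and rescaling `[0, R]` to `[0, 1]` turns the mean into an integral to
which dominated convergence applies.
-/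

open MeasureTheory Filter Set Topology

section Tail

variable {E : Type*} [NormedAddCommGroup E] [NormedSpace ℝ E] {μ : Measure ℝ} {f : ℝ → E}

theorem tendsto_setIntegral_Iio_atBot (hf : Integrable f μ) :
    Tendsto (fun s => ∫ t in Iio s, f t ∂μ) atBot (𝓝 0) := by
  have h := tendsto_setIntegral_of_antitone (μ := μ) (f := f) (s := fun s : ℝ => Iio (-s))
    (fun _ => measurableSet_Iio) (fun _ _ hst => Iio_subset_Iio (neg_le_neg hst))
    ⟨0, hf.integrableOn⟩
  have hempty : ⋂ s : ℝ, Iio (-s) = ∅ :=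
    eq_empty_of_forall_notMem fun t ht => lt_irrefl t (by simpa using mem_iInter.1 ht (-t))
  rw [hempty, Measure.restrict_empty, integral_zero_measure] at h
  simpa only [Function.comp_def, neg_neg] using h.comp tendsto_neg_atBot_atTop

theorem continuous_setIntegral_Iio [NullSingletonClass μ] (hf : Integrable f μ) :
    Continuous fun s => ∫ t in Iio s, f t ∂μ :=
  continuous_iff_continuousAt.2 fun s =>
    (hf.integrableOn.continuousOn_Iic_primitive_Iio (a₀ := s + 1)).continuousAt
      (Iic_mem_nhds (lt_add_one s))

theorem norm_setIntegral_Iio_le (hf : Integrable f μ) (s : ℝ) :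
    ‖∫ t in Iio s, f t ∂μ‖ ≤ ∫ t, ‖f t‖ ∂μ :=
  (norm_integral_le_integral_norm f).trans
    (setIntegral_le_integral hf.norm (ae_of_all _ fun _ => norm_nonneg _))

end Tail

theorem setIntegral_Ioi_comp_sub_left {E : Type*} [NormedAddCommGroup E] [NormedSpace ℝ E]
    (f : ℝ → E) (x R : ℝ) : ∫ y in Ioi R, f (x - y) = ∫ t in Iio (x - R), f t := by
  have hpre : (x - ·) ⁻¹' Iio (x - R) = Ioi R := by
    ext y; simp
  calc ∫ y in Ioi R, f (x - y) = ∫ y, (Iio (x - R)).indicator f (x - y) := by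
        rw [← integral_indicator measurableSet_Ioi, ← hpre]
        exact integral_congr_ae (ae_of_all _ fun y => indicator_comp_right (x - ·))
    _ = ∫ t in Iio (x - R), f t := by
        rw [integral_sub_left_eq_self, integral_indicator measurableSet_Iio]

theorem tendsto_inv_smul_intervalIntegral_of_tendsto_atTop {E : Type*} [NormedAddCommGroup E]
    [NormedSpace ℝ E] {g : ℝ → E} {C : ℝ} (hg : StronglyMeasurable g) (hC : ∀ x, ‖g x‖ ≤ C)
    (hlim : Tendsto g atTop (𝓝 0)) :
    Tendsto (fun R => R⁻¹ • ∫ x in 0..R, g x) atTop (𝓝 0) := by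
  have hrescale : ∀ R > 0, R⁻¹ • ∫ x in 0..R, g x = ∫ w in 0..1, g (R * w) := fun R hR => by
    simp [intervalIntegral.integral_comp_mul_left g hR.ne']
  have hdom : Tendsto (fun R => ∫ w in 0..1, g (R * w)) atTop (𝓝 (∫ _ in (0 : ℝ)..1, (0 : E))) :=
    intervalIntegral.tendsto_integral_filter_of_dominated_convergence (fun _ => C)
      (.of_forall fun R => (hg.comp_measurable (measurable_const_mul R)).aestronglyMeasurable)
      (.of_forall fun R => ae_of_all _ fun w _ => hC _) intervalIntegrable_const
      (ae_of_all _ fun w hw => hlim.comp (tendsto_id.atTop_mul_const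
        (by simpa using hw.1)))
  rw [intervalIntegral.integral_zero] at hdom
  exact hdom.congr' ((eventually_gt_atTop 0).mono fun R hR => (hrescale R hR).symm)

theorem box_boundary_interaction_tendsto_zero_general
    (f : ℝ → ℝ) (hf : Integrable f) :
    Tendsto (fun R : ℝ =>
        (1 / R) * ∫ x in Set.Ioc (0 : ℝ) R, ∫ y in Set.Ioi R, f (x - y))
      atTop (nhds 0) := by
  set G := fun s => ∫ t in Iio s, f t
  have hcesaro := tendsto_inv_smul_intervalIntegral_of_tendsto_atTop (g := fun u => G (-u))
    ((continuous_setIntegral_Iio hf).comp continuous_neg).stronglyMeasurable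
    (fun u => norm_setIntegral_Iio_le hf (-u))
    ((tendsto_setIntegral_Iio_atBot hf).comp tendsto_neg_atTop_atBot)
  refine hcesaro.congr' ((eventually_ge_atTop 0).mono fun R hR => ?_)
  have hinner : ∀ x, ∫ y in Ioi R, f (x - y) = G (-(R - x)) := fun x => by
    rw [setIntegral_Ioi_comp_sub_left, neg_sub]
  simp only [one_div, smul_eq_mul, hinner, ← intervalIntegral.integral_of_le hR,
    intervalIntegral.integral_comp_sub_left (fun u => G (-u)), sub_self, sub_zero]

theorem box_boundary_interaction_tendsto_zero
    (f : ℝ → ℝ) (hf : Integrable f) (hpos : ∀ x, 0 ≤ f x) :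
    Tendsto (fun R : ℝ =>
        (1 / R) * ∫ x in Set.Ioc (0 : ℝ) R, ∫ y in Set.Ioi R, f (x - y))
      atTop (nhds 0) :=
  box_boundary_interaction_tendsto_zero_general f hf
end

section
/- Let B ⊂ ℝ^ν be measurable and t > 0. For x ∉ B with d = dist(x, B) > 0 and any ε > 0, the Gaussian average (4πt)^{−ν/2} ∫_B exp(−‖x−y‖²/(4t)) dy is at most C_ε · exp(−d²/((4+ε)t)), where C_ε depends only on ε and ν (and not on t, x, B). -/
/-!
Every `y ∈ B` has `‖x - y‖ ≥ d`. Splitting `1/(4t) = 1/((4+ε)t) + ε/(4(4+ε)t)`, the heat kernel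
on `B` is therefore at most `exp (-d²/((4+ε)t))` times the wider Gaussian
`exp (-ε‖x - y‖²/(4(4+ε)t))`, whose integral over the whole space is `(4πt · (4+ε)/ε)^(ν/2)`.
The factor `(4πt)^(-ν/2)` cancels the `t`-dependence of this constant.
-/

open MeasureTheory Real Metric Module

theorem exp_neg_sq_div_le_mul_exp {ε t d r : ℝ} (hε : 0 < ε) (ht : 0 < t) (hd : 0 ≤ d)
    (hdr : d ≤ r) :
    exp (-r ^ 2 / (4 * t)) ≤
      exp (-d ^ 2 / ((4 + ε) * t)) * exp (-(ε / (4 * (4 + ε) * t)) * r ^ 2) := by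
  have hsplit : -r ^ 2 / (4 * t) =
      -r ^ 2 / ((4 + ε) * t) + -(ε / (4 * (4 + ε) * t)) * r ^ 2 := by
    field_simp
    ring
  have hsq : d ^ 2 / ((4 + ε) * t) ≤ r ^ 2 / ((4 + ε) * t) := by
    gcongr
  rw [← exp_add, exp_le_exp, hsplit, neg_div, neg_div]
  linarith

section Gaussian

variable {V : Type*} [NormedAddCommGroup V] [InnerProductSpace ℝ V] [FiniteDimensional ℝ V]
  [MeasurableSpace V] [BorelSpace V]

theorem integral_exp_neg_mul_sq_norm_sub {b : ℝ} (hb : 0 < b) (x : V) :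
    ∫ y : V, exp (-b * ‖x - y‖ ^ 2) = (π / b) ^ (finrank ℝ V / 2 : ℝ) := by
  rw [integral_sub_left_eq_self (μ := volume) (fun z => exp (-b * ‖z‖ ^ 2)) x]
  exact GaussianFourier.integral_rexp_neg_mul_sq_norm hb

theorem integrable_exp_neg_mul_sq_norm_sub {b : ℝ} (hb : 0 < b) (x : V) :
    Integrable fun y : V => exp (-b * ‖x - y‖ ^ 2) :=
  Integrable.of_integral_ne_zero <| by
    rw [integral_exp_neg_mul_sq_norm_sub hb x]
    positivity

theorem setIntegral_exp_neg_sq_norm_sub_div_le {ε t : ℝ} (hε : 0 < ε) (ht : 0 < t)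
    (B : Set V) (x : V) :
    ∫ y in B, exp (-‖x - y‖ ^ 2 / (4 * t)) ≤
      (4 * π * t * ((4 + ε) / ε)) ^ (finrank ℝ V / 2 : ℝ) *
        exp (-infDist x B ^ 2 / ((4 + ε) * t)) := by
  set b := ε / (4 * (4 + ε) * t)
  have hb : 0 < b := by positivity
  have hπb : π / b = 4 * π * t * ((4 + ε) / ε) := by
    simp only [b]
    field_simp
  set c := exp (-infDist x B ^ 2 / ((4 + ε) * t))
  have hfar : ∀ y ∈ {y : V | infDist x B ≤ ‖x - y‖},
      exp (-‖x - y‖ ^ 2 / (4 * t)) ≤ c * exp (-b * ‖x - y‖ ^ 2) := fun y hy =>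
    exp_neg_sq_div_le_mul_exp hε ht infDist_nonneg hy
  have hB_far : B ⊆ {y : V | infDist x B ≤ ‖x - y‖} := fun y hy => by
    simpa [dist_eq_norm] using infDist_le_dist_of_mem (x := x) hy
  have hle : ∀ᵐ y ∂volume.restrict B,
      exp (-‖x - y‖ ^ 2 / (4 * t)) ≤ c * exp (-b * ‖x - y‖ ^ 2) :=
    ae_restrict_of_ae_restrict_of_subset hB_far <|
      ae_restrict_of_forall_mem (measurableSet_le measurable_const (by fun_prop)) hfar
  have hint := integrable_exp_neg_mul_sq_norm_sub hb x
  calc ∫ y in B, exp (-‖x - y‖ ^ 2 / (4 * t))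
      ≤ ∫ y in B, c * exp (-b * ‖x - y‖ ^ 2) :=
        integral_mono_of_nonneg (.of_forall fun _ => (exp_pos _).le)
          (hint.const_mul c).integrableOn hle
    _ = c * ∫ y in B, exp (-b * ‖x - y‖ ^ 2) := integral_const_mul c _
    _ ≤ c * ∫ y, exp (-b * ‖x - y‖ ^ 2) :=
        mul_le_mul_of_nonneg_left
          (setIntegral_le_integral hint (.of_forall fun _ => (exp_pos _).le)) (exp_pos _).le
    _ = (4 * π * t * ((4 + ε) / ε)) ^ (finrank ℝ V / 2 : ℝ) * c := by
        rw [integral_exp_neg_mul_sq_norm_sub hb x, hπb, mul_comm]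

end Gaussian

theorem gaussian_average_hitting_bound (ν : ℕ) (ε : ℝ) (hε : 0 < ε) :
    ∃ C > (0 : ℝ), ∀ (t : ℝ), 0 < t →
      ∀ (B : Set (EuclideanSpace ℝ (Fin ν))) (x : EuclideanSpace ℝ (Fin ν)),
        MeasurableSet B → x ∉ B → 0 < Metric.infDist x B →
        (4 * Real.pi * t) ^ (-(ν : ℝ) / 2) *
            (∫ y in B, Real.exp (-‖x - y‖ ^ 2 / (4 * t)))
          ≤ C * Real.exp (-(Metric.infDist x B) ^ 2 / ((4 + ε) * t)) := by
  refine ⟨((4 + ε) / ε) ^ ((ν : ℝ) / 2), by positivity, fun t ht B x _ _ _ => ?_⟩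
  have hbound := setIntegral_exp_neg_sq_norm_sub_div_le hε ht B x
  rw [finrank_euclideanSpace_fin] at hbound
  have h4πt : 0 < 4 * π * t := by positivity
  calc (4 * π * t) ^ (-(ν : ℝ) / 2) * ∫ y in B, exp (-‖x - y‖ ^ 2 / (4 * t))
      ≤ (4 * π * t) ^ (-(ν : ℝ) / 2) * ((4 * π * t * ((4 + ε) / ε)) ^ ((ν : ℝ) / 2) *
          exp (-infDist x B ^ 2 / ((4 + ε) * t))) := by gcongr
    _ = ((4 + ε) / ε) ^ ((ν : ℝ) / 2) * exp (-infDist x B ^ 2 / ((4 + ε) * t)) := by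
        rw [neg_div, rpow_neg h4πt.le, mul_rpow h4πt.le (by positivity), ← mul_assoc,
          inv_mul_cancel_left₀ (rpow_pos_of_pos h4πt _).ne']
end

section
/- Let A : C_b(ℝ^ν) → L²(ℝ^ν) and B : L²(ℝ^ν) → C_b(ℝ^ν) be bounded linear operators, and assume A preserves positivity (f ≥ 0 pointwise implies A f ≥ 0 a.e.). Then the composition A∘B : L²(ℝ^ν) → L²(ℝ^ν) is a Hilbert–Schmidt operator and ‖A∘B‖_{HS} ≤ ‖A‖_{C_b → L²} · ‖B‖_{L² → C_b}. -/
/-!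
Let `e₁, …, eₙ` be orthonormal and `Fᵢ = B eᵢ`. Bessel's inequality for the functional
`f ↦ (B f)(x)` gives `∑ Fᵢ(x)² ≤ ‖B‖²`, so `g = (∑ Fᵢ²)^{1/2}` is in `C_b` with `‖g‖ ≤ ‖B‖`.
By Cauchy–Schwarz `∑ ωᵢ Fᵢ ≤ |ω| g` for every `ω ∈ ℝⁿ`, hence by positivity of `A`,
`∑ ωᵢ (A Fᵢ)(y) ≤ |ω| (A g)(y)` for a.e. `y`. Letting `ω` run through a countable dense set
yields `∑ (A Fᵢ)(y)² ≤ (A g)(y)²` a.e., and integrating,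
`∑ ‖A B eᵢ‖² ≤ ‖A g‖² ≤ (‖A‖ ‖B‖)²`.
-/

open MeasureTheory BoundedContinuousFunction

section Bessel

variable {E : Type*} [NormedAddCommGroup E] [InnerProductSpace ℝ E] [CompleteSpace E]
  {κ : Type*} [Fintype κ] {e : κ → E}

theorem Orthonormal.sum_sq_apply_le_sq_opNorm (he : Orthonormal ℝ e) (φ : E →L[ℝ] ℝ) :
    ∑ i, φ (e i) ^ 2 ≤ ‖φ‖ ^ 2 := by
  set u := (InnerProductSpace.toDual ℝ E).symm φ
  have hu : ∀ v, φ v = inner ℝ u v := fun v => InnerProductSpace.toDual_symm_apply.symm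
  calc ∑ i, φ (e i) ^ 2 = ∑ i, ‖inner ℝ (e i) u‖ ^ 2 := by
        simp only [hu, real_inner_comm, Real.norm_eq_abs, sq_abs]
    _ ≤ ‖u‖ ^ 2 := he.sum_inner_products_le u
    _ = ‖φ‖ ^ 2 := by rw [LinearIsometryEquiv.norm_map]

theorem Orthonormal.sum_sq_apply_apply_le_sq_opNorm {X : Type*} [TopologicalSpace X]
    (he : Orthonormal ℝ e) (B : E →L[ℝ] X →ᵇ ℝ) (x : X) :
    ∑ i, B (e i) x ^ 2 ≤ ‖B‖ ^ 2 := by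
  have hx : ‖(evalCLM ℝ x).comp B‖ ≤ ‖B‖ :=
    ContinuousLinearMap.opNorm_le_bound _ (norm_nonneg B) fun u =>
      ((B u).norm_coe_le_norm x).trans (B.le_opNorm u)
  exact (he.sum_sq_apply_le_sq_opNorm _).trans (pow_le_pow_left₀ (norm_nonneg _) hx 2)

end Bessel

theorem norm_le_of_dense_inner_le {E : Type*} [NormedAddCommGroup E] [InnerProductSpace ℝ E]
    {D : Set E} (hD : Dense D) {v : E} {c : ℝ} (hc : 0 ≤ c)
    (h : ∀ ω ∈ D, inner ℝ ω v ≤ ‖ω‖ * c) : ‖v‖ ≤ c := by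
  have hv : inner ℝ v v ≤ ‖v‖ * c :=
    hD.induction (P := fun ω => inner ℝ ω v ≤ ‖ω‖ * c) h
      (isClosed_le (by fun_prop) (by fun_prop)) v
  rw [real_inner_self_eq_norm_sq] at hv
  nlinarith [norm_nonneg v]

namespace BoundedContinuousFunction

variable {X : Type*} [TopologicalSpace X] {κ : Type*} [Fintype κ] (F : κ → X →ᵇ ℝ)

noncomputable def euclideanNorm : X →ᵇ ℝ :=
  ofNormedAddCommGroup (fun x => ‖WithLp.toLp 2 fun i => F i x‖) (by fun_prop)
    √(∑ i, ‖F i‖ ^ 2) fun x => by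
      rw [norm_norm, EuclideanSpace.norm_eq]
      gcongr with i
      exact (F i).norm_coe_le_norm x

@[simp]
theorem euclideanNorm_apply (x : X) : euclideanNorm F x = ‖WithLp.toLp 2 fun i => F i x‖ := rfl

theorem euclideanNorm_nonneg : 0 ≤ euclideanNorm F := fun _ => norm_nonneg _

theorem norm_euclideanNorm_le {C : ℝ} (hC : 0 ≤ C) (h : ∀ x, ∑ i, F i x ^ 2 ≤ C ^ 2) :
    ‖euclideanNorm F‖ ≤ C := by
  refine (norm_le hC).2 fun x => ?_
  rw [euclideanNorm_apply, norm_norm, ← pow_le_pow_iff_left₀ (norm_nonneg _) hC two_ne_zero,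
    EuclideanSpace.real_norm_sq_eq]
  exact h x

theorem sum_smul_le_norm_smul_euclideanNorm (ω : EuclideanSpace ℝ κ) :
    ∑ i, ω i • F i ≤ ‖ω‖ • euclideanNorm F := fun x => by
  simpa [PiLp.inner_apply, mul_comm ‖ω‖] using real_inner_le_norm (WithLp.toLp 2 fun i => F i x) ω

end BoundedContinuousFunction

section PositiveMap

variable {X : Type*} [TopologicalSpace X] {Y : Type*} [MeasurableSpace Y] {μ : Measure Y}
  {p : ENNReal} [Fact (1 ≤ p)] {κ : Type*} [Fintype κ]

theorem ae_inner_le_norm_mul_map_euclideanNorm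
    (A : (X →ᵇ ℝ) →L[ℝ] Lp ℝ p μ) (hA : ∀ f, 0 ≤ f → 0 ≤ A f) (F : κ → X →ᵇ ℝ)
    (ω : EuclideanSpace ℝ κ) :
    ∀ᵐ y ∂μ, inner ℝ ω (WithLp.toLp 2 fun i => A (F i) y) ≤ ‖ω‖ * A (euclideanNorm F) y := by
  have hle := (Lp.coeFn_le _ _).2 <|
    (monotone_iff_map_nonneg A).2 hA (sum_smul_le_norm_smul_euclideanNorm F ω)
  simp_rw [map_sum, map_smul] at hle
  have hsmul : ∀ᵐ y ∂μ, ∀ i, (ω i • A (F i)) y = ω i * A (F i) y := by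
    rw [ae_all_iff]
    exact fun i => Lp.coeFn_smul _ _
  filter_upwards [hle, hsmul, Lp.coeFn_fun_finsetSum Finset.univ fun i => ω i • A (F i),
    Lp.coeFn_smul ‖ω‖ (A (euclideanNorm F))] with y hy hsmul_y hsum_y hg_y
  rw [hsum_y, hg_y] at hy
  simpa [PiLp.inner_apply, hsmul_y, mul_comm] using hy

theorem ae_norm_le_map_euclideanNorm
    (A : (X →ᵇ ℝ) →L[ℝ] Lp ℝ p μ) (hA : ∀ f, 0 ≤ f → 0 ≤ A f) (F : κ → X →ᵇ ℝ) :
    ∀ᵐ y ∂μ, ‖(WithLp.toLp 2 fun i => A (F i) y : EuclideanSpace ℝ κ)‖ ≤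
      A (euclideanNorm F) y := by
  obtain ⟨D, hD_countable, hD_dense⟩ :=
    TopologicalSpace.exists_countable_dense (EuclideanSpace ℝ κ)
  have hD := (ae_ball_iff hD_countable).2 fun ω _ =>
    ae_inner_le_norm_mul_map_euclideanNorm A hA F ω
  filter_upwards [hD, (Lp.coeFn_nonneg _).2 (hA _ (euclideanNorm_nonneg F))] with y hy hy_nonneg
  exact norm_le_of_dense_inner_le hD_dense hy_nonneg hy

end PositiveMap

theorem MeasureTheory.Lp.sq_norm_eq_integral_sq {Y : Type*} [MeasurableSpace Y] {μ : Measure Y}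
    (f : Lp ℝ 2 μ) : ‖f‖ ^ 2 = ∫ y, f y ^ 2 ∂μ := by
  rw [← real_inner_self_eq_norm_sq, L2.inner_def]
  simp [sq]

theorem MeasureTheory.Lp.sum_sq_norm_le_sq_norm_of_ae {Y : Type*} [MeasurableSpace Y]
    {μ : Measure Y} {κ : Type*} [Fintype κ] {f : κ → Lp ℝ 2 μ} {h : Lp ℝ 2 μ}
    (hfh : ∀ᵐ y ∂μ, ∑ i, f i y ^ 2 ≤ h y ^ 2) : ∑ i, ‖f i‖ ^ 2 ≤ ‖h‖ ^ 2 := by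
  have hint : ∀ g : Lp ℝ 2 μ, Integrable (fun y => g y ^ 2) μ := fun g => (Lp.memLp g).integrable_sq
  simp only [sq_norm_eq_integral_sq]
  rw [← integral_finsetSum _ fun i _ => hint (f i)]
  exact integral_mono_ae (integrable_finsetSum _ fun i _ => hint (f i)) (hint h) hfh

section HilbertSchmidt

variable {X : Type*} [TopologicalSpace X] {Y : Type*} [MeasurableSpace Y] {μ : Measure Y}
  {E : Type*} [NormedAddCommGroup E] [InnerProductSpace ℝ E] [CompleteSpace E]

theorem Orthonormal.sum_sq_norm_comp_apply_le {κ : Type*} [Fintype κ] {e : κ → E}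
    (A : (X →ᵇ ℝ) →L[ℝ] Lp ℝ 2 μ) (hA : ∀ f, 0 ≤ f → 0 ≤ A f) (B : E →L[ℝ] X →ᵇ ℝ)
    (he : Orthonormal ℝ e) : ∑ i, ‖(A.comp B) (e i)‖ ^ 2 ≤ (‖A‖ * ‖B‖) ^ 2 := by
  set F := fun i => B (e i)
  have hF : ‖euclideanNorm F‖ ≤ ‖B‖ :=
    norm_euclideanNorm_le F (norm_nonneg B) (he.sum_sq_apply_apply_le_sq_opNorm B)
  calc ∑ i, ‖(A.comp B) (e i)‖ ^ 2 ≤ ‖A (euclideanNorm F)‖ ^ 2 := by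
        refine Lp.sum_sq_norm_le_sq_norm_of_ae ?_
        filter_upwards [ae_norm_le_map_euclideanNorm A hA F] with y hy
        simpa [EuclideanSpace.real_norm_sq_eq] using pow_le_pow_left₀ (norm_nonneg _) hy 2
    _ ≤ (‖A‖ * ‖B‖) ^ 2 := by
        gcongr
        exact A.le_opNorm_of_le hF

theorem Orthonormal.sum_finset_sq_norm_comp_apply_le {ι : Type*} {e : ι → E}
    (A : (X →ᵇ ℝ) →L[ℝ] Lp ℝ 2 μ) (hA : ∀ f, 0 ≤ f → 0 ≤ A f) (B : E →L[ℝ] X →ᵇ ℝ)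
    (he : Orthonormal ℝ e) (s : Finset ι) :
    ∑ i ∈ s, ‖(A.comp B) (e i)‖ ^ 2 ≤ (‖A‖ * ‖B‖) ^ 2 := by
  rw [← Finset.sum_coe_sort]
  exact (he.comp _ Subtype.val_injective).sum_sq_norm_comp_apply_le A hA B

end HilbertSchmidt

/-- Little Grothendieck theorem, Hilbert–Schmidt case: if `A : C_b(ℝ^ν) → L²`
is bounded and positivity preserving and `B : L² → C_b(ℝ^ν)` is bounded, then
`A ∘ B` is Hilbert–Schmidt (its squared norms over any Hilbert basis are summable)
with Hilbert–Schmidt norm at most `‖A‖ ‖B‖`. -/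
theorem composition_hilbertSchmidt
    (ν : ℕ)
    (A : BoundedContinuousFunction (EuclideanSpace ℝ (Fin ν)) ℝ →L[ℝ]
          Lp ℝ 2 (volume : Measure (EuclideanSpace ℝ (Fin ν))))
    (B : Lp ℝ 2 (volume : Measure (EuclideanSpace ℝ (Fin ν))) →L[ℝ]
          BoundedContinuousFunction (EuclideanSpace ℝ (Fin ν)) ℝ)
    (hApos : ∀ f : BoundedContinuousFunction (EuclideanSpace ℝ (Fin ν)) ℝ,
      (∀ x, 0 ≤ f x) → 0 ≤ᵐ[volume] (A f : EuclideanSpace ℝ (Fin ν) → ℝ)) :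
    ∀ (ι : Type) (b : HilbertBasis ι ℝ
        (Lp ℝ 2 (volume : Measure (EuclideanSpace ℝ (Fin ν))))),
      Summable (fun i => ‖(A.comp B) (b i)‖ ^ 2) ∧
      Real.sqrt (∑' i, ‖(A.comp B) (b i)‖ ^ 2) ≤ ‖A‖ * ‖B‖ := by
  intro ι b
  have hA : ∀ f, 0 ≤ f → 0 ≤ A f := fun f hf => (Lp.coeFn_nonneg _).1 (hApos f hf)
  have hfinite := b.orthonormal.sum_finset_sq_norm_comp_apply_le A hA B
  have hsummable := summable_of_sum_le (fun _ => sq_nonneg _) hfinite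
  refine ⟨hsummable, ?_⟩
  calc √(∑' i, ‖(A.comp B) (b i)‖ ^ 2) ≤ √((‖A‖ * ‖B‖) ^ 2) :=
        Real.sqrt_le_sqrt (hsummable.tsum_le_of_sum_le hfinite)
    _ = ‖A‖ * ‖B‖ := Real.sqrt_sq (by positivity)
end

section
/- Let A : L¹(ℝ^ν) → L²(ℝ^ν) and B : L²(ℝ^ν) → L¹(ℝ^ν) be bounded linear operators, B preserving positivity, and suppose there exists φ ∈ L¹(ℝ^ν) such that |(B f)(x)| ≤ φ(x) a.e. for every f ∈ L² with ‖f‖_{L²} ≤ 1. Then A∘B is trace class on L²(ℝ^ν) and ‖A∘B‖_{tr} ≤ ‖A‖_{L¹→L²} · ‖φ‖_{L¹}. -/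
/-!
Fix finitely many indices and replace each `e i` by `± e i`, so that every term
`⟪f i, A (B (e i))⟫` is nonnegative. The functions `B (e i)` assemble into
`v : ℝ^ν → ℓ²(κ)`; since `⟪c, v x⟫ = B (∑ cᵢ eᵢ) x` is dominated by `φ x` for every `c` in the
unit ball, and countably many `c` suffice, `‖v x‖ ≤ φ x` almost everywhere. Finally the
functional `G ↦ ∑ ⟪fᵢ, A Gᵢ⟫` on `L¹(ℓ²(κ))` has norm at most `‖A‖`, as one checks on indicators,
so the finite sum is at most `‖A‖ ∫ ‖v‖ ≤ ‖A‖ ∫ φ`.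
-/

open MeasureTheory
open scoped RealInnerProductSpace

section InnerProduct

variable {E : Type*} [NormedAddCommGroup E] [InnerProductSpace ℝ E]

theorem Orthonormal.norm_sum_smul {κ : Type*} [Fintype κ] {v : κ → E} (hv : Orthonormal ℝ v)
    (c : EuclideanSpace ℝ κ) : ‖∑ i, c i • v i‖ = ‖c‖ := by
  rw [← sq_eq_sq₀ (norm_nonneg _) (norm_nonneg _), ← real_inner_self_eq_norm_sq,
    hv.inner_sum, EuclideanSpace.norm_sq_eq]
  simp [sq]

theorem norm_le_of_forall_inner_le {z : E} {b : ℝ} (h : ∀ c : E, ‖c‖ ≤ 1 → ⟪c, z⟫ ≤ b) :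
    ‖z‖ ≤ b := by
  rcases eq_or_ne z 0 with rfl | hz
  · simpa using h 0 (by simp)
  · have hz' : ‖z‖ ≠ 0 := norm_ne_zero_iff.2 hz
    simpa [real_inner_smul_left, real_inner_self_eq_norm_sq, norm_smul, hz', sq] using
      h (‖z‖⁻¹ • z) (by simp [norm_smul, hz'])

theorem ae_norm_le_of_forall_inner_le [TopologicalSpace.SeparableSpace E] {α : Type*}
    [MeasurableSpace α] {μ : Measure α} {v : α → E} {φ : α → ℝ}
    (h : ∀ c : E, ‖c‖ ≤ 1 → ∀ᵐ x ∂μ, ⟪c, v x⟫ ≤ φ x) : ∀ᵐ x ∂μ, ‖v x‖ ≤ φ x := by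
  obtain ⟨D, hD_ball, hD_countable, hD_closure⟩ :=
    (TopologicalSpace.IsSeparable.of_separableSpace
      (Metric.closedBall (0 : E) 1)).exists_countable_dense_subset
  have hD : ∀ᵐ x ∂μ, ∀ c ∈ D, ⟪c, v x⟫ ≤ φ x :=
    (ae_ball_iff hD_countable).2 fun c hc => h c (by simpa using hD_ball hc)
  filter_upwards [hD] with x hx
  refine norm_le_of_forall_inner_le fun c hc => ?_
  have hclosed : IsClosed {c : E | ⟪c, v x⟫ ≤ φ x} :=
    isClosed_le (continuous_id.inner continuous_const) continuous_const
  exact closure_minimal hx hclosed (hD_closure (by simpa using hc))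

end InnerProduct

section L1

variable {α : Type*} [MeasurableSpace α] {μ : Measure α}

theorem ContinuousLinearMap.compLpL_indicatorConstLp {E : Type*} [NormedAddCommGroup E]
    [NormedSpace ℝ E] {p : ENNReal} [Fact (1 ≤ p)] {s : Set α} (hs : MeasurableSet s)
    (hμs : μ s ≠ ⊤) (L : E →L[ℝ] ℝ) (c : E) :
    L.compLpL p μ (indicatorConstLp p hs hμs c) = L c • indicatorConstLp p hs hμs (1 : ℝ) := by
  refine Lp.ext ?_
  filter_upwards [L.coeFn_compLpL (indicatorConstLp p hs hμs c), indicatorConstLp_coeFn (c := c),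
    indicatorConstLp_coeFn (c := (1 : ℝ)), Lp.coeFn_smul (L c) (indicatorConstLp p hs hμs (1 : ℝ))]
    with x hLx hcx h1x hsmul
  rw [hLx, hcx, hsmul, Pi.smul_apply, h1x]
  by_cases hx : x ∈ s <;> simp [hx]

theorem L1.norm_add_of_disjoint_support {E : Type*} [NormedAddCommGroup E] {f g : α → E}
    (hf : MemLp f 1 μ) (hg : MemLp g 1 μ)
    (hfg : Disjoint (Function.support f) (Function.support g)) :
    ‖hf.toLp f + hg.toLp g‖ = ‖hf.toLp f‖ + ‖hg.toLp g‖ := by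
  simp only [L1.norm_eq_integral_norm]
  rw [← integral_add (L1.integrable_coeFn _).norm (L1.integrable_coeFn _).norm]
  refine integral_congr_ae ?_
  filter_upwards [Lp.coeFn_add (hf.toLp f) (hg.toLp g), hf.coeFn_toLp, hg.coeFn_toLp]
    with x hsum hfx hgx
  rw [hsum, Pi.add_apply, hfx, hgx]
  by_cases hx : f x = 0
  · simp [hx]
  · simp [Function.notMem_support.1 fun hgx => hfg.ne_of_mem hx hgx rfl]

variable {H : Type*} [NormedAddCommGroup H] [InnerProductSpace ℝ H] {κ : Type*} [Fintype κ]

/-- On an indicator `c • 1_s` the left side is `⟪∑ cᵢ fᵢ, A 1_s⟫ ≤ ‖c‖ ‖A‖ μ(s)`; the bound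
passes to sums of functions with disjoint supports and, by continuity, to all of `L¹`. -/
theorem sum_inner_compLpL_proj_le {f : κ → H} (hf : Orthonormal ℝ f) (A : Lp ℝ 1 μ →L[ℝ] H)
    (G : Lp (EuclideanSpace ℝ κ) 1 μ) :
    ∑ i, ⟪f i, A ((EuclideanSpace.proj (𝕜 := ℝ) i).compLpL 1 μ G)⟫ ≤ ‖A‖ * ‖G‖ := by
  induction G using Lp.induction ENNReal.one_ne_top with
  | indicatorConst c hs hμs =>
    set χ := indicatorConstLp 1 hs hμs.ne (1 : ℝ)
    calc ∑ i, ⟪f i, A ((EuclideanSpace.proj (𝕜 := ℝ) i).compLpL 1 μ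
            (indicatorConstLp 1 hs hμs.ne c))⟫
        = ⟪∑ i, c i • f i, A χ⟫ := by
          simp [ContinuousLinearMap.compLpL_indicatorConstLp, sum_inner, real_inner_smul_left,
            real_inner_smul_right, χ]
      _ ≤ ‖c‖ * (‖A‖ * ‖χ‖) := by
          grw [real_inner_le_norm, hf.norm_sum_smul, A.le_opNorm]
      _ = ‖A‖ * ‖indicatorConstLp 1 hs hμs.ne c‖ := by
          simp [χ, norm_indicatorConstLp]; ring
  | add hF hG hdisj hF_le hG_le =>
    rw [L1.norm_add_of_disjoint_support hF hG hdisj]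
    simp only [map_add, inner_add_right, Finset.sum_add_distrib]
    linarith
  | isClosed =>
    exact isClosed_le (by fun_prop) (by fun_prop)

variable {K : Type*} [NormedAddCommGroup K] [InnerProductSpace ℝ K]

theorem sum_inner_le_of_dominated (A : Lp ℝ 1 μ →L[ℝ] H) (B : K →L[ℝ] Lp ℝ 1 μ) {φ : α → ℝ}
    (hφ : Integrable φ μ) (hdom : ∀ u : K, ‖u‖ ≤ 1 → ∀ᵐ x ∂μ, |B u x| ≤ φ x)
    {e : κ → K} {f : κ → H} (he : Orthonormal ℝ e) (hf : Orthonormal ℝ f) :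
    ∑ i, ⟪f i, A (B (e i))⟫ ≤ ‖A‖ * ∫ x, φ x ∂μ := by
  set v : α → EuclideanSpace ℝ κ := fun x => WithLp.toLp 2 fun i => B (e i) x
  have hv : Integrable v μ := Integrable.of_eval_piLp fun i => L1.integrable_coeFn (B (e i))
  have hv_le : ∀ᵐ x ∂μ, ‖v x‖ ≤ φ x := by
    refine ae_norm_le_of_forall_inner_le fun c hc => ?_
    have hcoord : ∀ᵐ x ∂μ, ∀ i, B (c i • e i) x = c i * B (e i) x := by
      refine ae_all_iff.2 fun i => ?_
      filter_upwards [Lp.coeFn_smul (c i) (B (e i))] with x hx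
      rw [map_smul, hx, Pi.smul_apply, smul_eq_mul]
    filter_upwards [hdom _ ((he.norm_sum_smul c).trans_le hc),
      Lp.coeFn_fun_finsetSum Finset.univ fun i => B (c i • e i), hcoord] with x hx hsum hcoord
    rw [map_sum, hsum] at hx
    calc ⟪c, v x⟫ = ∑ i, c i * B (e i) x := by simp [v, PiLp.inner_apply, mul_comm]
      _ = ∑ i, B (c i • e i) x := Finset.sum_congr rfl fun i _ => (hcoord i).symm
      _ ≤ φ x := (le_abs_self _).trans hx
  have hproj : ∀ i, (EuclideanSpace.proj (𝕜 := ℝ) i).compLpL 1 μ (hv.toL1 v) = B (e i) := by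
    intro i
    refine Lp.ext ?_
    filter_upwards [(EuclideanSpace.proj (𝕜 := ℝ) i).coeFn_compLpL (hv.toL1 v), hv.coeFn_toL1]
      with x hx hvx
    rw [hx, hvx]
    rfl
  calc ∑ i, ⟪f i, A (B (e i))⟫
      = ∑ i, ⟪f i, A ((EuclideanSpace.proj (𝕜 := ℝ) i).compLpL 1 μ (hv.toL1 v))⟫ := by
        simp only [hproj]
    _ ≤ ‖A‖ * ∫ x, ‖v x‖ ∂μ := by
        rw [← L1.norm_of_fun_eq_integral_norm hv]
        exact sum_inner_compLpL_proj_le hf A _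
    _ ≤ ‖A‖ * ∫ x, φ x ∂μ :=
        mul_le_mul_of_nonneg_left (integral_mono_ae hv.norm hφ hv_le) (norm_nonneg A)

theorem sum_abs_inner_le_of_dominated (A : Lp ℝ 1 μ →L[ℝ] H) (B : K →L[ℝ] Lp ℝ 1 μ)
    {φ : α → ℝ} (hφ : Integrable φ μ) (hdom : ∀ u : K, ‖u‖ ≤ 1 → ∀ᵐ x ∂μ, |B u x| ≤ φ x)
    {e : κ → K} {f : κ → H} (he : Orthonormal ℝ e) (hf : Orthonormal ℝ f) :
    ∑ i, |⟪f i, A (B (e i))⟫| ≤ ‖A‖ * ∫ x, φ x ∂μ := by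
  set e' : κ → K := fun i => if 0 ≤ ⟪f i, A (B (e i))⟫ then e i else -e i
  have he' : Orthonormal ℝ e' :=
    he.orthonormal_of_forall_eq_or_eq_neg fun i => by unfold e'; split_ifs <;> simp
  have habs : ∀ i, |⟪f i, A (B (e i))⟫| = ⟪f i, A (B (e' i))⟫ := by
    intro i
    unfold e'
    split_ifs with h
    · exact abs_of_nonneg h
    · simpa using abs_of_neg (not_le.1 h)
  simpa only [habs] using sum_inner_le_of_dominated A B hφ hdom he' hf

end L1

/-- The trace norm of `A ∘ B` is expressed as the supremum, over pairs of Hilbert bases `e`, `f`,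
of `∑ |⟪f i, (A ∘ B) (e i)⟫|`. -/
theorem composition_traceClass_general
    (ν : ℕ)
    (A : Lp ℝ 1 (volume : Measure (EuclideanSpace ℝ (Fin ν))) →L[ℝ]
          Lp ℝ 2 (volume : Measure (EuclideanSpace ℝ (Fin ν))))
    (B : Lp ℝ 2 (volume : Measure (EuclideanSpace ℝ (Fin ν))) →L[ℝ]
          Lp ℝ 1 (volume : Measure (EuclideanSpace ℝ (Fin ν))))
    (φ : EuclideanSpace ℝ (Fin ν) → ℝ) (hφ : Integrable φ)
    (hdom : ∀ u : Lp ℝ 2 (volume : Measure (EuclideanSpace ℝ (Fin ν))),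
      ‖u‖ ≤ 1 → ∀ᵐ x ∂(volume : Measure (EuclideanSpace ℝ (Fin ν))),
        |(B u : EuclideanSpace ℝ (Fin ν) → ℝ) x| ≤ φ x) :
    ∀ (ι : Type)
      (e f : HilbertBasis ι ℝ
        (Lp ℝ 2 (volume : Measure (EuclideanSpace ℝ (Fin ν))))),
      Summable (fun i => |(inner ℝ (f i) ((A.comp B) (e i)) : ℝ)|) ∧
      (∑' i, |(inner ℝ (f i) ((A.comp B) (e i)) : ℝ)|) ≤ ‖A‖ * ∫ x, |φ x| := by
  intro ι e f
  have hfinite : ∀ S : Finset ι, ∑ i ∈ S, |⟪f i, (A.comp B) (e i)⟫| ≤ ‖A‖ * ∫ x, |φ x| := by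
    intro S
    calc ∑ i ∈ S, |⟪f i, (A.comp B) (e i)⟫| = ∑ i : S, |⟪f i, A (B (e i))⟫| :=
          (Finset.sum_coe_sort S _).symm
      _ ≤ ‖A‖ * ∫ x, φ x := sum_abs_inner_le_of_dominated A B hφ hdom
          (e.orthonormal.comp _ Subtype.val_injective) (f.orthonormal.comp _ Subtype.val_injective)
      _ ≤ ‖A‖ * ∫ x, |φ x| := mul_le_mul_of_nonneg_left
          (integral_mono hφ hφ.abs fun x => le_abs_self (φ x)) (norm_nonneg A)
  have hsummable := summable_of_sum_le (fun _ => abs_nonneg _) hfinite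
  exact ⟨hsummable, hsummable.tsum_le_of_sum_le hfinite⟩

/-- Little Grothendieck theorem, trace-class case: if `A : L¹(ℝ^ν) → L²(ℝ^ν)` is
bounded, `B : L²(ℝ^ν) → L¹(ℝ^ν)` is bounded and positivity preserving, and `B` is
dominated by a fixed `φ ∈ L¹` on the unit ball, then `A ∘ B` is trace class on `L²`
with trace norm at most `‖A‖ ‖φ‖_{L¹}` (trace norm characterized as the supremum
over pairs of Hilbert bases of `∑ |⟨f i, (A∘B)(e i)⟩|`). -/
theorem composition_traceClass
    (ν : ℕ)
    (A : Lp ℝ 1 (volume : Measure (EuclideanSpace ℝ (Fin ν))) →L[ℝ]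
          Lp ℝ 2 (volume : Measure (EuclideanSpace ℝ (Fin ν))))
    (B : Lp ℝ 2 (volume : Measure (EuclideanSpace ℝ (Fin ν))) →L[ℝ]
          Lp ℝ 1 (volume : Measure (EuclideanSpace ℝ (Fin ν))))
    (hBpos : ∀ u : Lp ℝ 2 (volume : Measure (EuclideanSpace ℝ (Fin ν))),
      0 ≤ᵐ[volume] (u : EuclideanSpace ℝ (Fin ν) → ℝ) →
      0 ≤ᵐ[volume] (B u : EuclideanSpace ℝ (Fin ν) → ℝ))
    (φ : EuclideanSpace ℝ (Fin ν) → ℝ) (hφ : Integrable φ)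
    (hdom : ∀ u : Lp ℝ 2 (volume : Measure (EuclideanSpace ℝ (Fin ν))),
      ‖u‖ ≤ 1 → ∀ᵐ x ∂(volume : Measure (EuclideanSpace ℝ (Fin ν))),
        |(B u : EuclideanSpace ℝ (Fin ν) → ℝ) x| ≤ φ x) :
    ∀ (ι : Type)
      (e f : HilbertBasis ι ℝ
        (Lp ℝ 2 (volume : Measure (EuclideanSpace ℝ (Fin ν))))),
      Summable (fun i => |(inner ℝ (f i) ((A.comp B) (e i)) : ℝ)|) ∧
      (∑' i, |(inner ℝ (f i) ((A.comp B) (e i)) : ℝ)|) ≤ ‖A‖ * ∫ x, |φ x| :=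
  composition_traceClass_general ν A B φ hφ hdom
end

section
/- Let g : ℝ → ℝ be C¹ with compact support, and set g̃(x) = g(−log x) for x > 0, g̃(0) = 0. Suppose (P_k) is a sequence of polynomials with P_k(0) = P_k'(0) = 0 such that sup_x |g̃(x) − P_k(x)| → 0, sup_x |g̃'(x) − P_k'(x)| → 0, and sup_x |g̃''(x) − P_k''(x)| → 0 on a compact interval [0, X]. Then sup_{x ∈ (0, X]} |g̃(x) − P_k(x)| / x → 0 as k → ∞. -/
/-!
Since `g` has compact support, `g̃` vanishes on some `[0, x₀)` with `x₀ > 0`, and it is `C¹` on all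
of `ℝ`. For `x ≥ x₀` the quotient is at most `sup |g̃ - P_k| / x₀`. For `x < x₀`, `g̃ x = 0` and
`P_k 0 = 0`, so by the mean value theorem `|P_k x| / x = |P_k' c| = |g̃' c - P_k' c|` for some
`c ∈ (0, x)`.
-/

open Filter Set Topology

theorem HasCompactSupport.exists_pos_forall_lt_ite_comp_neg_log_eq_zero {g : ℝ → ℝ}
    (hg : HasCompactSupport g) :
    ∃ x₀ > 0, ∀ x < x₀, (if 0 < x then g (-Real.log x) else 0) = 0 := by
  have hneg_log : Tendsto (fun x => -Real.log x) (𝓝[>] 0) (cocompact ℝ) :=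
    (tendsto_neg_atBot_atTop.comp Real.tendsto_log_nhdsGT_zero).mono_right atTop_le_cocompact
  obtain ⟨x₀, hx₀, hzero⟩ := (nhdsGT_basis (0 : ℝ)).eventually_iff.1 <|
    hneg_log.eventually <| mem_of_superset hg.isCompact.compl_mem_cocompact
      fun _ => image_eq_zero_of_notMem_tsupport
  refine ⟨x₀, hx₀, fun x hx => ?_⟩
  split_ifs with hx0
  exacts [hzero ⟨hx0, hx⟩, rfl]

theorem contDiff_ite_comp_neg_log {g : ℝ → ℝ} {n : WithTop ℕ∞} {x₀ : ℝ} (hg : ContDiff ℝ n g)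
    (hx₀ : 0 < x₀) (hzero : ∀ x < x₀, (if 0 < x then g (-Real.log x) else 0) = 0) :
    ContDiff ℝ n fun x => if 0 < x then g (-Real.log x) else 0 := by
  refine contDiff_iff_contDiffAt.2 fun x => ?_
  rcases lt_or_ge x x₀ with hx | hx
  · exact contDiffAt_const.congr_of_eventuallyEq (eventually_of_mem (Iio_mem_nhds hx) hzero)
  · have hx0 : 0 < x := hx₀.trans_le hx
    exact (hg.contDiffAt.comp x (Real.contDiffAt_log.2 hx0.ne').neg).congr_of_eventuallyEq
      (eventually_of_mem (Ioi_mem_nhds hx0) fun y hy => if_pos hy)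

theorem bddAbove_range_Icc {u : ℝ → ℝ} (hu : Continuous u) (a b : ℝ) :
    BddAbove (range fun x : Icc a b => u x) :=
  (isCompact_range (hu.comp continuous_subtype_val)).bddAbove

section VanishingNearZero

variable {f p : ℝ → ℝ} {x₀ : ℝ}

theorem exists_abs_sub_div_eq_abs_deriv_sub (hp : Differentiable ℝ p) (hp0 : p 0 = 0)
    (hzero : ∀ y < x₀, f y = 0) {x : ℝ} (hx : 0 < x) (hxx₀ : x < x₀) :
    ∃ c ∈ Ioo 0 x, |f x - p x| / x = |deriv f c - deriv p c| := by
  obtain ⟨c, hc, hslope⟩ := exists_deriv_eq_slope p hx hp.continuous.continuousOn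
    hp.differentiableOn
  have hf_eq : f =ᶠ[𝓝 c] fun _ => 0 := eventually_of_mem (Iio_mem_nhds (hc.2.trans hxx₀)) hzero
  have hfc : deriv f c = 0 := by rw [hf_eq.deriv_eq, deriv_const]
  refine ⟨c, hc, ?_⟩
  rw [hfc, hslope, hzero x hxx₀, hp0, sub_zero, sub_zero, zero_sub, abs_neg, zero_sub, abs_neg,
    abs_div, abs_of_pos hx]

theorem iSup_Ioc_abs_sub_div_le (X : ℝ) (hf : ContDiff ℝ 1 f) (hp : ContDiff ℝ 1 p)
    (hp0 : p 0 = 0) (hx₀ : 0 < x₀) (hzero : ∀ y < x₀, f y = 0) :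
    ⨆ x : Ioc 0 X, |f x - p x| / x ≤
      (⨆ y : Icc 0 X, |deriv f y - deriv p y|) + (⨆ y : Icc 0 X, |f y - p y|) / x₀ := by
  have hS₁ : 0 ≤ ⨆ y : Icc 0 X, |deriv f y - deriv p y| := Real.iSup_nonneg fun _ => abs_nonneg _
  have hS₀ : 0 ≤ ⨆ y : Icc 0 X, |f y - p y| := Real.iSup_nonneg fun _ => abs_nonneg _
  refine Real.iSup_le (fun ⟨x, hx0, hxX⟩ => ?_) (add_nonneg hS₁ (div_nonneg hS₀ hx₀.le))
  rcases lt_or_ge x x₀ with hxx₀ | hx₀x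
  · obtain ⟨c, hc, hc_eq⟩ := exists_abs_sub_div_eq_abs_deriv_sub (hp.differentiable one_ne_zero)
      hp0 hzero hx0 hxx₀
    calc |f x - p x| / x = |deriv f c - deriv p c| := hc_eq
      _ ≤ ⨆ y : Icc 0 X, |deriv f y - deriv p y| :=
        le_ciSup (f := fun y : Icc 0 X => |deriv f y - deriv p y|)
          (bddAbove_range_Icc
            ((hf.continuous_deriv le_rfl).sub (hp.continuous_deriv le_rfl)).abs 0 X)
          ⟨c, hc.1.le, hc.2.le.trans hxX⟩
      _ ≤ _ := le_add_of_nonneg_right (div_nonneg hS₀ hx₀.le)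
  · calc |f x - p x| / x ≤ (⨆ y : Icc 0 X, |f y - p y|) / x₀ := by
          refine div_le_div₀ hS₀ ?_ hx₀ hx₀x
          exact le_ciSup (f := fun y : Icc 0 X => |f y - p y|)
            (bddAbove_range_Icc (hf.continuous.sub hp.continuous).abs 0 X) ⟨x, hx0.le, hxX⟩
      _ ≤ _ := le_add_of_nonneg_left hS₁

end VanishingNearZero

theorem polynomial_approx_div_x_tendsto_zero_general
    (g : ℝ → ℝ) (hg : ContDiff ℝ 1 g) (hsupp : HasCompactSupport g)
    (X : ℝ)
    (gt : ℝ → ℝ) (hgt : ∀ x, gt x = if 0 < x then g (-Real.log x) else 0)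
    (P : ℕ → Polynomial ℝ)
    (hP0 : ∀ k, (P k).eval 0 = 0)
    (h0 : Tendsto (fun k => ⨆ x : Set.Icc (0 : ℝ) X,
        |gt x - (P k).eval (x : ℝ)|) atTop (nhds 0))
    (h1 : Tendsto (fun k => ⨆ x : Set.Icc (0 : ℝ) X,
        |deriv gt x - ((P k).derivative).eval (x : ℝ)|) atTop (nhds 0)) :
    Tendsto (fun k => ⨆ x : Set.Ioc (0 : ℝ) X,
        |gt x - (P k).eval (x : ℝ)| / (x : ℝ))
      atTop (nhds 0) := by
  obtain ⟨x₀, hx₀, hzero⟩ := hsupp.exists_pos_forall_lt_ite_comp_neg_log_eq_zero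
  obtain rfl : gt = _ := funext hgt
  have hgt_C1 := contDiff_ite_comp_neg_log hg hx₀ hzero
  refine squeeze_zero (fun k => Real.iSup_nonneg fun x => div_nonneg (abs_nonneg _) x.2.1.le)
    (fun k => ?_) (by simpa using h1.add (h0.div_const x₀))
  simpa using iSup_Ioc_abs_sub_div_le X hgt_C1 ((P k).contDiff_aeval 1) (by simpa using hP0 k)
    hx₀ hzero

theorem polynomial_approx_div_x_tendsto_zero
    (g : ℝ → ℝ) (hg : ContDiff ℝ 1 g) (hsupp : HasCompactSupport g)
    (X : ℝ) (hX : 0 < X)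
    (gt : ℝ → ℝ) (hgt : ∀ x, gt x = if 0 < x then g (-Real.log x) else 0)
    (P : ℕ → Polynomial ℝ)
    (hP0 : ∀ k, (P k).eval 0 = 0)
    (hP'0 : ∀ k, ((P k).derivative).eval 0 = 0)
    (h0 : Tendsto (fun k => ⨆ x : Set.Icc (0 : ℝ) X,
        |gt x - (P k).eval (x : ℝ)|) atTop (nhds 0))
    (h1 : Tendsto (fun k => ⨆ x : Set.Icc (0 : ℝ) X,
        |deriv gt x - ((P k).derivative).eval (x : ℝ)|) atTop (nhds 0))
    (h2 : Tendsto (fun k => ⨆ x : Set.Icc (0 : ℝ) X,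
        |deriv (deriv gt) x - ((P k).derivative.derivative).eval (x : ℝ)|)
      atTop (nhds 0)) :
    Tendsto (fun k => ⨆ x : Set.Ioc (0 : ℝ) X,
        |gt x - (P k).eval (x : ℝ)| / (x : ℝ))
      atTop (nhds 0) :=
  polynomial_approx_div_x_tendsto_zero_general g hg hsupp X gt hgt P hP0 h0 h1
end
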